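/- arXiv:1705.06120 — 2 statements merged into one kernel-verified Lean document; each statement's English description precedes it below -/
import Mathlib

section
/- Let M be an n×n Hermitian positive definite matrix with condition number κ = λ_max(M)/λ_min(M). For all nonzero w, x ∈ ℂ^n: (1/κ) sin²(w, x) ≤ sin_M²(w, x) ≤ (1/4)(κ+1)² sin²(w, x). -/
open Matrix
open scoped ComplexOrder

noncomputable section

/-- Euclidean norm of a complex vector. -/
def en {ι : Type*} [Fintype ι] (v : ι → ℂ) : ℝ := Real.sqrt (∑ i, ‖v i‖ ^ 2)

/-- The ordinary sine of the angle between `z` and `y`. -/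
def sinE {n : ℕ} (z y : Fin n → ℂ) : ℝ :=
  en (y - ((star z ⬝ᵥ y) / (star z ⬝ᵥ z)) • z) / en y

/-- Squared Euclidean norm. -/
def Nv {ι : Type*} [Fintype ι] (v : ι → ℂ) : ℝ := ∑ i, ‖v i‖ ^ 2

lemma Nv_nonneg {ι : Type*} [Fintype ι] (v : ι → ℂ) : 0 ≤ Nv v :=
  Finset.sum_nonneg fun _ _ => sq_nonneg _

lemma Nv_pos {ι : Type*} [Fintype ι] {v : ι → ℂ} (hv : v ≠ 0) : 0 < Nv v := by
  obtain ⟨i, hi⟩ := Function.ne_iff.mp hv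
  exact Finset.sum_pos' (fun j _ => sq_nonneg _)
    ⟨i, Finset.mem_univ i, by have := norm_pos_iff.mpr hi; positivity⟩

lemma en_sq {ι : Type*} [Fintype ι] (v : ι → ℂ) : en v ^ 2 = Nv v :=
  Real.sq_sqrt (Nv_nonneg v)

lemma Nv_eq_re {n : ℕ} (v : Fin n → ℂ) : Nv v = (star v ⬝ᵥ v).re := by
  simp [Nv, dotProduct, Complex.sq_norm, Complex.normSq_apply]

lemma Nv_add_of_orth {n : ℕ} (a b : Fin n → ℂ) (h : star a ⬝ᵥ b = 0) :
    Nv (a + b) = Nv a + Nv b := by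
  have h2 : star b ⬝ᵥ a = 0 := by
    have := congrArg star h
    rw [star_dotProduct, star_star, star_zero] at this
    exact this
  simp only [Nv_eq_re, star_add, add_dotProduct, dotProduct_add, h, h2]
  simp

lemma Nv_min {n : ℕ} (z y : Fin n → ℂ) (hz : z ≠ 0) (c : ℂ) :
    Nv (y - ((star z ⬝ᵥ y) / (star z ⬝ᵥ z)) • z) ≤ Nv (y - c • z) := by
  set d : ℂ := (star z ⬝ᵥ y) / (star z ⬝ᵥ z) with hd
  have hzz : star z ⬝ᵥ z ≠ 0 := by
    intro h0
    exact hz (dotProduct_star_self_eq_zero.mp h0)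
  have horth : star z ⬝ᵥ (y - d • z) = 0 := by
    rw [dotProduct_sub, dotProduct_smul, hd, smul_eq_mul, div_mul_cancel₀ _ hzz, sub_self]
  have horth2 : star ((d - c) • z) ⬝ᵥ (y - d • z) = 0 := by
    rw [star_smul, smul_dotProduct, horth, smul_zero]
  have hsplit : y - c • z = (d - c) • z + (y - d • z) := by
    ext i; simp [sub_smul]
  rw [hsplit, Nv_add_of_orth _ _ horth2]
  have := Nv_nonneg ((d - c) • z)
  linarith

lemma sinE_sq {n : ℕ} (z y : Fin n → ℂ) :
    sinE z y ^ 2 = Nv (y - ((star z ⬝ᵥ y) / (star z ⬝ᵥ z)) • z) / Nv y := by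
  rw [sinE, div_pow, en_sq, en_sq]

lemma posSemidef_smul_sub {n : ℕ} {M : Matrix (Fin n) (Fin n) ℂ} (hM : M.IsHermitian) (c : ℝ)
    (h : ∀ i, hM.eigenvalues i ≤ c) : ((c : ℂ) • 1 - M).PosSemidef := by
  have hU : (hM.eigenvectorUnitary : Matrix (Fin n) (Fin n) ℂ) *
      star (hM.eigenvectorUnitary : Matrix (Fin n) (Fin n) ℂ) = 1 :=
    (Matrix.mem_unitaryGroup_iff).mp hM.eigenvectorUnitary.2
  have key : (c : ℂ) • 1 - M = (hM.eigenvectorUnitary : Matrix (Fin n) (Fin n) ℂ) *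
      diagonal (fun i => (c : ℂ) - (hM.eigenvalues i : ℂ)) *
      (hM.eigenvectorUnitary : Matrix (Fin n) (Fin n) ℂ)ᴴ := by
    have : (diagonal (fun i => (c : ℂ) - (hM.eigenvalues i : ℂ))) =
        (c : ℂ) • 1 - diagonal (RCLike.ofReal ∘ hM.eigenvalues) := by
      rw [smul_one_eq_diagonal, ← diagonal_sub]
      rfl
    rw [this, mul_sub, sub_mul]
    conv_lhs => rw [hM.spectral_theorem]
    congr 1
    rw [Matrix.mul_smul, mul_one, Matrix.smul_mul, ← Matrix.star_eq_conjTranspose, hU]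
  rw [key]
  refine PosSemidef.mul_mul_conjTranspose_same (posSemidef_diagonal_iff.mpr fun i => ?_) _
  rw [← Complex.ofReal_sub]
  exact Complex.zero_le_real.mpr (by linarith [h i])

lemma posSemidef_sub_smul {n : ℕ} {M : Matrix (Fin n) (Fin n) ℂ} (hM : M.IsHermitian) (c : ℝ)
    (h : ∀ i, c ≤ hM.eigenvalues i) : (M - (c : ℂ) • 1).PosSemidef := by
  have hU : (hM.eigenvectorUnitary : Matrix (Fin n) (Fin n) ℂ) *
      star (hM.eigenvectorUnitary : Matrix (Fin n) (Fin n) ℂ) = 1 :=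
    (Matrix.mem_unitaryGroup_iff).mp hM.eigenvectorUnitary.2
  have key : M - (c : ℂ) • 1 = (hM.eigenvectorUnitary : Matrix (Fin n) (Fin n) ℂ) *
      diagonal (fun i => (hM.eigenvalues i : ℂ) - (c : ℂ)) *
      (hM.eigenvectorUnitary : Matrix (Fin n) (Fin n) ℂ)ᴴ := by
    have : (diagonal (fun i => (hM.eigenvalues i : ℂ) - (c : ℂ))) =
        diagonal (RCLike.ofReal ∘ hM.eigenvalues) - (c : ℂ) • 1 := by
      rw [smul_one_eq_diagonal, ← diagonal_sub]
      rfl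
    rw [this, mul_sub, sub_mul]
    conv_lhs => rw [hM.spectral_theorem]
    congr 1
    rw [Matrix.mul_smul, mul_one, Matrix.smul_mul, ← Matrix.star_eq_conjTranspose, hU]
  rw [key]
  refine PosSemidef.mul_mul_conjTranspose_same (posSemidef_diagonal_iff.mpr fun i => ?_) _
  rw [← Complex.ofReal_sub]
  exact Complex.zero_le_real.mpr (by linarith [h i])

lemma re_quad_le {n : ℕ} {M : Matrix (Fin n) (Fin n) ℂ} (c : ℝ)
    (hpsd : ((c : ℂ) • 1 - M).PosSemidef) (v : Fin n → ℂ) :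
    (star v ⬝ᵥ M *ᵥ v).re ≤ c * (star v ⬝ᵥ v).re := by
  have h0 := hpsd.re_dotProduct_nonneg v
  have e : star v ⬝ᵥ ((c : ℂ) • 1 - M) *ᵥ v =
      (c : ℂ) * (star v ⬝ᵥ v) - star v ⬝ᵥ M *ᵥ v := by
    rw [sub_mulVec, dotProduct_sub, smul_mulVec, one_mulVec, dotProduct_smul, smul_eq_mul]
  rw [e] at h0
  simp only [RCLike.re_to_complex, Complex.sub_re, Complex.re_ofReal_mul] at h0
  linarith

lemma le_re_quad {n : ℕ} {M : Matrix (Fin n) (Fin n) ℂ} (c : ℝ)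
    (hpsd : (M - (c : ℂ) • 1).PosSemidef) (v : Fin n → ℂ) :
    c * (star v ⬝ᵥ v).re ≤ (star v ⬝ᵥ M *ᵥ v).re := by
  have h0 := hpsd.re_dotProduct_nonneg v
  have e : star v ⬝ᵥ (M - (c : ℂ) • 1) *ᵥ v =
      star v ⬝ᵥ M *ᵥ v - (c : ℂ) * (star v ⬝ᵥ v) := by
    rw [sub_mulVec, dotProduct_sub, smul_mulVec, one_mulVec, dotProduct_smul, smul_eq_mul]
  rw [e] at h0
  simp only [RCLike.re_to_complex, Complex.sub_re, Complex.re_ofReal_mul] at h0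
  linarith

lemma quad_mulVec {n : ℕ} {L : Matrix (Fin n) (Fin n) ℂ} (hL : L.IsHermitian) (v : Fin n → ℂ) :
    star (L *ᵥ v) ⬝ᵥ (L *ᵥ v) = star v ⬝ᵥ (L * L) *ᵥ v := by
  rw [star_mulVec, hL.eq, ← dotProduct_mulVec, mulVec_mulVec]

theorem stmt12 {n : ℕ} (L M : Matrix (Fin n) (Fin n) ℂ)
    (hL : L.PosDef) (hM : M.PosDef) (hML : M = L * L)
    (κ : ℝ) (hκ : κ = (⨆ i, hM.1.eigenvalues i) / (⨅ i, hM.1.eigenvalues i))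
    (w x : Fin n → ℂ) (hw : w ≠ 0) (hx : x ≠ 0) :
    (1 / κ) * sinE w x ^ 2 ≤ sinE (L.mulVec w) (L.mulVec x) ^ 2 ∧
      sinE (L.mulVec w) (L.mulVec x) ^ 2 ≤ (1 / 4) * (κ + 1) ^ 2 * sinE w x ^ 2 := by
  classical
  have hne : Nonempty (Fin n) := by
    by_contra h
    rw [not_nonempty_iff] at h
    exact hw (funext fun i => (h.false i).elim)
  set lam := hM.1.eigenvalues with hlam
  set a : ℝ := ⨅ i, lam i with ha
  set b : ℝ := ⨆ i, lam i with hb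
  have hbdB : BddBelow (Set.range lam) := Set.Finite.bddBelow (Set.finite_range lam)
  have hbdA : BddAbove (Set.range lam) := Set.Finite.bddAbove (Set.finite_range lam)
  have hla : ∀ i, a ≤ lam i := fun i => ciInf_le hbdB i
  have hlb : ∀ i, lam i ≤ b := fun i => le_ciSup hbdA i
  have hapos : 0 < a := by
    obtain ⟨j, hj⟩ := Finite.exists_min lam
    have h1 : lam j ≤ a := le_ciInf hj
    exact lt_of_lt_of_le (hM.eigenvalues_pos j) h1
  have hab : a ≤ b := le_trans (hla (Classical.arbitrary _)) (hlb (Classical.arbitrary _))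
  have hbpos : 0 < b := lt_of_lt_of_le hapos hab
  -- quadratic form bounds
  have hub : ∀ v : Fin n → ℂ, Nv (L *ᵥ v) ≤ b * Nv v := by
    intro v
    rw [Nv_eq_re, Nv_eq_re, quad_mulVec hL.1, ← hML]
    exact re_quad_le b (posSemidef_smul_sub hM.1 b hlb) v
  have hlbv : ∀ v : Fin n → ℂ, a * Nv v ≤ Nv (L *ᵥ v) := by
    intro v
    rw [Nv_eq_re, Nv_eq_re, quad_mulVec hL.1, ← hML]
    exact le_re_quad a (posSemidef_sub_smul hM.1 a hla) v
  have hLw : L *ᵥ w ≠ 0 := by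
    intro h0
    have h1 := hlbv w
    rw [h0] at h1
    have := Nv_pos hw
    have : Nv (0 : Fin n → ℂ) = 0 := by simp [Nv]
    nlinarith [Nv_pos hw, hlbv w]
  have hLx : L *ᵥ x ≠ 0 := by
    intro h0
    have h1 := hlbv x
    rw [h0] at h1
    have h2 : Nv (0 : Fin n → ℂ) = 0 := by simp [Nv]
    nlinarith [Nv_pos hx]
  set c0 : ℂ := (star w ⬝ᵥ x) / (star w ⬝ᵥ w) with hc0
  set cM : ℂ := (star (L *ᵥ w) ⬝ᵥ (L *ᵥ x)) / (star (L *ᵥ w) ⬝ᵥ (L *ᵥ w)) with hcM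
  set r : Fin n → ℂ := x - c0 • w with hr
  set R : Fin n → ℂ := (L *ᵥ x) - cM • (L *ᵥ w) with hR
  have hRL : R = L *ᵥ (x - cM • w) := by
    rw [hR, mulVec_sub, mulVec_smul]
  have hrl : r = x - c0 • w := hr
  have hssq : sinE w x ^ 2 = Nv r / Nv x := sinE_sq w x
  have hMsq : sinE (L.mulVec w) (L.mulVec x) ^ 2 = Nv R / Nv (L *ᵥ x) := sinE_sq _ _
  have hNx : 0 < Nv x := Nv_pos hx
  have hNLx : 0 < Nv (L *ᵥ x) := Nv_pos hLx
  have hNr : 0 ≤ Nv r := Nv_nonneg r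
  have hNR : 0 ≤ Nv R := Nv_nonneg R
  -- key inequalities
  have h1 : a * Nv r ≤ Nv R := by
    have step1 : Nv r ≤ Nv (x - cM • w) := Nv_min w x hw cM
    have step2 : a * Nv (x - cM • w) ≤ Nv (L *ᵥ (x - cM • w)) := hlbv _
    rw [hRL]
    nlinarith
  have h2 : Nv (L *ᵥ x) ≤ b * Nv x := hub x
  have h3 : Nv R ≤ b * Nv r := by
    have step1 : Nv R ≤ Nv ((L *ᵥ x) - c0 • (L *ᵥ w)) := Nv_min (L *ᵥ w) (L *ᵥ x) hLw c0
    have e : (L *ᵥ x) - c0 • (L *ᵥ w) = L *ᵥ r := by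
      rw [hr, mulVec_sub, mulVec_smul]
    rw [e] at step1
    exact le_trans step1 (hub r)
  have h4 : a * Nv x ≤ Nv (L *ᵥ x) := hlbv x
  have hκval : κ = b / a := hκ
  have hκ1 : 1 ≤ κ := by
    rw [hκval]
    exact (one_le_div hapos).mpr hab
  constructor
  · rw [hssq, hMsq]
    have eq1 : (1 / κ) * (Nv r / Nv x) = (a * Nv r) / (b * Nv x) := by
      rw [hκval]
      field_simp
    rw [eq1]
    exact div_le_div₀ hNR h1 hNLx h2
  · rw [hssq, hMsq]
    have step : Nv R / Nv (L *ᵥ x) ≤ (b * Nv r) / (a * Nv x) :=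
      div_le_div₀ (by positivity) h3 (by positivity) h4
    refine le_trans step ?_
    have eq2 : (b * Nv r) / (a * Nv x) = κ * (Nv r / Nv x) := by
      rw [hκval]
      field_simp
    rw [eq2]
    have hκle : κ ≤ (1 / 4) * (κ + 1) ^ 2 := by nlinarith [sq_nonneg (κ - 1)]
    have hfrac : 0 ≤ Nv r / Nv x := div_nonneg hNr (le_of_lt hNx)
    nlinarith
end
end

section
/- Let A = U Σ_A X^{-1}, B = V Σ_B X^{-1} be a GSVD of (A,B) with c_j² + s_j² = 1 for each j. If x̃ = ξ x₁ + f where x₁ is the first column of X, f is orthogonal to X^{-*}e₁, and c̃² = ‖Ax̃‖², s̃² = ‖Bx̃‖², then c̃² = ξ² c₁² + ‖Af‖² and s̃² = ξ² s₁² + ‖Bf‖². In particular the errors c̃² − ξ²c₁² and s̃² − ξ²s₁² are quadratic in ‖f‖. -/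
/-!
Write `A = U D X⁻¹`. Since `U` is an isometry, `‖A v‖ = ‖D X⁻¹ v‖`. The first column of `X` is
mapped by `X⁻¹` to `e₁`, while `f ⟂ X^{-*} e₁` says exactly that `(X⁻¹ f)₁ = 0`. Hence
`D X⁻¹ x̃ = ξ d₁ e₁ + D X⁻¹ f` is a sum of two orthogonal vectors, and Pythagoras gives the
identity, for `A` and `B` alike.
-/

open Matrix

noncomputable section

section EuclideanNorm

variable {ι κ : Type*} [Fintype ι] [Fintype κ]

lemma en_sq_s18 (v : ι → ℂ) : en v ^ 2 = (star v ⬝ᵥ v).re := by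
  rw [en, Real.sq_sqrt (by positivity), dotProduct, Complex.re_sum]
  refine Finset.sum_congr rfl fun i _ => ?_
  simp [← Complex.normSq_eq_norm_sq, Complex.normSq_apply]

lemma en_add_sq_of_star_dotProduct_eq_zero {v w : ι → ℂ} (h : star v ⬝ᵥ w = 0) :
    en (v + w) ^ 2 = en v ^ 2 + en w ^ 2 := by
  have h' : star w ⬝ᵥ v = 0 := by rw [star_dotProduct, h, star_zero]
  simp only [en_sq_s18, star_add, add_dotProduct, dotProduct_add, h, h', add_zero, zero_add,
    Complex.add_re]

lemma en_single [DecidableEq ι] (i : ι) (a : ℂ) : en (Pi.single i a) ^ 2 = ‖a‖ ^ 2 := by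
  rw [en, Real.sq_sqrt (by positivity), Finset.sum_eq_single i (fun j _ hj => by simp [hj])
    (by simp)]
  simp

lemma en_mulVec_of_conjTranspose_mul_self [DecidableEq ι] {U : Matrix κ ι ℂ} (hU : Uᴴ * U = 1) (v : ι → ℂ) :
    en (U *ᵥ v) = en v := by
  have hsq : en (U *ᵥ v) ^ 2 = en v ^ 2 := by
    rw [en_sq_s18, en_sq_s18, star_mulVec, dotProduct_mulVec, vecMul_vecMul, hU, vecMul_one]
  exact (pow_left_inj₀ (Real.sqrt_nonneg _) (Real.sqrt_nonneg _) two_ne_zero).mp hsq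

lemma star_conjTranspose_mulVec_single_dotProduct [DecidableEq ι] (M : Matrix ι κ ℂ) (i : ι)
    (f : κ → ℂ) : star (Mᴴ *ᵥ Pi.single i 1) ⬝ᵥ f = (M *ᵥ f) i := by
  rw [star_mulVec, conjTranspose_conjTranspose, ← dotProduct_mulVec, Pi.star_single, star_one,
    single_dotProduct, one_mul]

end EuclideanNorm

lemma en_isometry_diagonal_mul_inv_mulVec_sq {ι κ : Type*} [Fintype ι] [Fintype κ]
    [DecidableEq ι] {U : Matrix κ ι ℂ} (hU : Uᴴ * U = 1) (d : ι → ℂ) {X : Matrix ι ι ℂ}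
    (hX : IsUnit X.det) (ξ : ℂ) (i : ι) {f : ι → ℂ} (hf : (X⁻¹ *ᵥ f) i = 0) :
    en ((U * diagonal d * X⁻¹) *ᵥ (ξ • X *ᵥ Pi.single i 1 + f)) ^ 2
      = ‖ξ * d i‖ ^ 2 + en ((U * diagonal d * X⁻¹) *ᵥ f) ^ 2 := by
  have hfactor : ∀ v, (U * diagonal d * X⁻¹) *ᵥ v = U *ᵥ (diagonal d *ᵥ (X⁻¹ *ᵥ v)) := by
    simp [mulVec_mulVec, Matrix.mul_assoc]
  have hcol : X⁻¹ *ᵥ (X *ᵥ Pi.single i 1) = Pi.single i 1 := by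
    rw [mulVec_mulVec, nonsing_inv_mul X hX, one_mulVec]
  have hsplit : diagonal d *ᵥ (X⁻¹ *ᵥ (ξ • X *ᵥ Pi.single i 1 + f))
      = Pi.single i (ξ * d i) + diagonal d *ᵥ (X⁻¹ *ᵥ f) := by
    rw [mulVec_add, mulVec_smul, hcol, mulVec_add, mulVec_smul, diagonal_mulVec_single, mul_one,
      ← Pi.single_smul', smul_eq_mul]
  have horth : star (Pi.single i (ξ * d i)) ⬝ᵥ diagonal d *ᵥ (X⁻¹ *ᵥ f) = 0 := by
    rw [Pi.star_single, single_dotProduct, mulVec_diagonal, hf, mul_zero, mul_zero]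
  rw [hfactor, hfactor, en_mulVec_of_conjTranspose_mul_self hU,
    en_mulVec_of_conjTranspose_mul_self hU, hsplit, en_add_sq_of_star_dotProduct_eq_zero horth,
    en_single]

theorem stmt18_general {m p n : ℕ} [NeZero n]
    (A : Matrix (Fin m) (Fin n) ℂ) (B : Matrix (Fin p) (Fin n) ℂ)
    (U : Matrix (Fin m) (Fin n) ℂ) (V : Matrix (Fin p) (Fin n) ℂ)
    (X : Matrix (Fin n) (Fin n) ℂ) (hX : IsUnit X.det)
    (hU : Uᴴ * U = 1) (hV : Vᴴ * V = 1)
    (c s : Fin n → ℝ)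
    (hA : A = U * Matrix.diagonal (fun j => (c j : ℂ)) * X⁻¹)
    (hB : B = V * Matrix.diagonal (fun j => (s j : ℂ)) * X⁻¹)
    (ξ : ℝ) (x1 f xt : Fin n → ℂ)
    (hx1 : x1 = X.mulVec (Pi.single 0 1))
    (hf : star ((X⁻¹)ᴴ.mulVec (Pi.single 0 1)) ⬝ᵥ f = 0)
    (hxt : xt = ((ξ : ℝ) : ℂ) • x1 + f) :
    en (A.mulVec xt) ^ 2 = ξ ^ 2 * c 0 ^ 2 + en (A.mulVec f) ^ 2 ∧
      en (B.mulVec xt) ^ 2 = ξ ^ 2 * s 0 ^ 2 + en (B.mulVec f) ^ 2 := by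
  rw [star_conjTranspose_mulVec_single_dotProduct] at hf
  subst hA hB hxt hx1
  have hreal : ∀ r : ℝ, ‖(ξ : ℂ) * (r : ℂ)‖ ^ 2 = ξ ^ 2 * r ^ 2 := fun r => by
    rw [norm_mul, Complex.norm_real, Complex.norm_real, mul_pow, Real.norm_eq_abs,
      Real.norm_eq_abs, sq_abs, sq_abs]
  exact ⟨by rw [en_isometry_diagonal_mul_inv_mulVec_sq hU _ hX _ _ hf, hreal],
    by rw [en_isometry_diagonal_mul_inv_mulVec_sq hV _ hX _ _ hf, hreal]⟩

theorem stmt18 {m p n : ℕ} [NeZero n]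
    (A : Matrix (Fin m) (Fin n) ℂ) (B : Matrix (Fin p) (Fin n) ℂ)
    (U : Matrix (Fin m) (Fin n) ℂ) (V : Matrix (Fin p) (Fin n) ℂ)
    (X : Matrix (Fin n) (Fin n) ℂ) (hX : IsUnit X.det)
    (hU : Uᴴ * U = 1) (hV : Vᴴ * V = 1)
    (c s : Fin n → ℝ) (hcs : ∀ j, c j ^ 2 + s j ^ 2 = 1)
    (hA : A = U * Matrix.diagonal (fun j => (c j : ℂ)) * X⁻¹)
    (hB : B = V * Matrix.diagonal (fun j => (s j : ℂ)) * X⁻¹)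
    (ξ : ℝ) (x1 f xt : Fin n → ℂ)
    (hx1 : x1 = X.mulVec (Pi.single 0 1))
    (hf : star ((X⁻¹)ᴴ.mulVec (Pi.single 0 1)) ⬝ᵥ f = 0)
    (hxt : xt = ((ξ : ℝ) : ℂ) • x1 + f) :
    en (A.mulVec xt) ^ 2 = ξ ^ 2 * c 0 ^ 2 + en (A.mulVec f) ^ 2 ∧
      en (B.mulVec xt) ^ 2 = ξ ^ 2 * s 0 ^ 2 + en (B.mulVec f) ^ 2 :=
  stmt18_general A B U V X hX hU hV c s hA hB ξ x1 f xt hx1 hf hxt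
end
end
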